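/- arXiv:2102.05842 — 5 statements merged into one kernel-verified Lean document; each statement's English description precedes it below -/
import Mathlib

section
/- Let r : ℕ → ℂ be an arithmetic function with r(1) ≠ 0, let r⁻¹ denote its Dirichlet inverse, and define R̃(x) := ∑_{n ≤ x} (r ∗ μ)(n), where μ is the Möbius function. Then for every integer x ≥ 1, M(x) = ∑_{k=1}^{x} ( ∑_{j = ⌊x/(k+1)⌋ + 1}^{⌊x/k⌋} r⁻¹(j) ) · R̃(k). -/
open Finset ArithmeticFunction

private lemma hyp_sum (f g : ArithmeticFunction ℂ) (x : ℕ) :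
    ∑ n ∈ Icc 1 x, (f * g) n = ∑ j ∈ Icc 1 x, f j * ∑ m ∈ Icc 1 (x / j), g m := by
  simp_rw [ArithmeticFunction.mul_apply, Finset.mul_sum, Finset.sum_sigma']
  refine Finset.sum_nbij' (fun p => ⟨p.2.1, p.2.2⟩) (fun p => ⟨p.1 * p.2, p.1, p.2⟩)
    ?_ ?_ ?_ ?_ ?_
  · rintro ⟨n, d, e⟩ hp
    simp only [Finset.mem_sigma, Finset.mem_Icc, Nat.mem_divisorsAntidiagonal] at hp
    obtain ⟨⟨hn1, hnx⟩, hde, hn0⟩ := hp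
    have hd : 0 < d := by
      rcases Nat.eq_zero_or_pos d with h | h
      · subst h; simp at hde; omega
      · exact h
    have he : 0 < e := by
      rcases Nat.eq_zero_or_pos e with h | h
      · subst h; simp at hde; omega
      · exact h
    refine Finset.mem_sigma.mpr ⟨Finset.mem_Icc.mpr ⟨hd, ?_⟩, Finset.mem_Icc.mpr ⟨he, ?_⟩⟩
    · calc d ≤ d * e := Nat.le_mul_of_pos_right d he
        _ = n := hde
        _ ≤ x := hnx
    · rw [Nat.le_div_iff_mul_le hd]
      calc e * d = d * e := Nat.mul_comm _ _
        _ = n := hde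
        _ ≤ x := hnx
  · rintro ⟨j, m⟩ hp
    simp only [Finset.mem_sigma, Finset.mem_Icc] at hp
    obtain ⟨⟨hj1, hjx⟩, hm1, hmd⟩ := hp
    have hjm : j * m ≤ x := by
      rw [Nat.le_div_iff_mul_le (show 0 < j by omega)] at hmd
      calc j * m = m * j := Nat.mul_comm _ _
        _ ≤ x := hmd
    refine Finset.mem_sigma.mpr ⟨Finset.mem_Icc.mpr ⟨?_, hjm⟩,
      Nat.mem_divisorsAntidiagonal.mpr ⟨rfl, ?_⟩⟩
    · show 1 ≤ j * m
      exact Nat.one_le_iff_ne_zero.mpr (Nat.mul_ne_zero (by omega) (by omega))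
    · show j * m ≠ 0
      exact Nat.mul_ne_zero (by omega) (by omega)
  · rintro ⟨n, d, e⟩ hp
    simp only [Finset.mem_sigma, Finset.mem_Icc, Nat.mem_divisorsAntidiagonal] at hp
    obtain ⟨_, hde, _⟩ := hp
    simp [hde]
  · rintro ⟨j, m⟩ _; rfl
  · rintro ⟨n, d, e⟩ _; rfl

private lemma fiber_eq (x k : ℕ) (hk1 : 1 ≤ k) (hkx : k ≤ x) :
    (Icc 1 x).filter (fun j => x / j = k) = Icc (x / (k + 1) + 1) (x / k) := by
  ext j
  simp only [Finset.mem_filter, Finset.mem_Icc]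
  constructor
  · rintro ⟨⟨hj1, hjx⟩, hjk⟩
    constructor
    · rw [Nat.add_one_le_iff, Nat.div_lt_iff_lt_mul (show 0 < k + 1 by omega)]
      have h1 := Nat.div_add_mod x j
      have h2 : x % j < j := Nat.mod_lt _ (by omega)
      calc x = j * (x / j) + x % j := h1.symm
        _ = j * k + x % j := by rw [hjk]
        _ < j * k + j := by omega
        _ = j * (k + 1) := by ring
    · rw [Nat.le_div_iff_mul_le (show 0 < k by omega)]
      calc j * k = j * (x / j) := by rw [hjk]
        _ = x / j * j := Nat.mul_comm _ _
        _ ≤ x := Nat.div_mul_le_self x j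
  · rintro ⟨hlo, hhi⟩
    have hj1 : 1 ≤ j := le_trans (Nat.le_add_left 1 _) hlo
    have hjk : j * k ≤ x := (Nat.le_div_iff_mul_le (show 0 < k by omega)).mp hhi
    have hjx : j ≤ x := le_trans (Nat.le_mul_of_pos_right j (by omega)) hjk
    have h1 : k ≤ x / j := by
      rw [Nat.le_div_iff_mul_le (show 0 < j by omega)]
      calc k * j = j * k := Nat.mul_comm _ _
        _ ≤ x := hjk
    have h2 : x / j < k + 1 := by
      rw [Nat.div_lt_iff_lt_mul (show 0 < j by omega)]
      have hlo' : x / (k + 1) < j := by omega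
      rw [Nat.div_lt_iff_lt_mul (show 0 < k + 1 by omega)] at hlo'
      calc x < j * (k + 1) := hlo'
        _ = (k + 1) * j := Nat.mul_comm _ _
    exact ⟨⟨hj1, hjx⟩, by omega⟩

/-- Let `r : ℕ → ℂ` be an arithmetic function with `r 1 ≠ 0` and let
`rinv` be its Dirichlet inverse (characterized by `r * rinv = 1`).  With
`R̃(x) = ∑_{n ≤ x} (r ∗ μ)(n)` and `M(x) = ∑_{n ≤ x} μ(n)` the Mertens function, we have
`M(x) = ∑_{k=1}^{x} (∑_{j=⌊x/(k+1)⌋+1}^{⌊x/k⌋} rinv(j)) · R̃(k)` for every `x ≥ 1`. -/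
theorem stmt_2 (r rinv : ArithmeticFunction ℂ) (hr : r 1 ≠ 0) (hinv : r * rinv = 1)
    (x : ℕ) (hx : 1 ≤ x) :
    ((∑ n ∈ Finset.Icc 1 x, ArithmeticFunction.moebius n : ℤ) : ℂ) =
      ∑ k ∈ Finset.Icc 1 x,
        (∑ j ∈ Finset.Icc (x / (k + 1) + 1) (x / k), rinv j) *
          ∑ n ∈ Finset.Icc 1 k, ∑ d ∈ n.divisors,
            r d * (ArithmeticFunction.moebius (n / d) : ℂ) := by
  set μc : ArithmeticFunction ℂ := ((moebius : ArithmeticFunction ℤ) : ArithmeticFunction ℂ)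
  have hμ : rinv * (r * μc) = μc := by
    rw [← mul_assoc, mul_comm rinv r, hinv, one_mul]
  have hinner : ∀ k : ℕ, (∑ n ∈ Finset.Icc 1 k, ∑ d ∈ n.divisors,
      r d * (ArithmeticFunction.moebius (n / d) : ℂ)) = ∑ m ∈ Icc 1 k, (r * μc) m := by
    intro k
    refine Finset.sum_congr rfl fun n _ => ?_
    rw [ArithmeticFunction.mul_apply, Nat.sum_divisorsAntidiagonal (fun a b => r a * μc b)]
    exact Finset.sum_congr rfl fun d _ => by simp [μc]
  calc ((∑ n ∈ Finset.Icc 1 x, ArithmeticFunction.moebius n : ℤ) : ℂ)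
      = ∑ n ∈ Icc 1 x, (rinv * (r * μc)) n := by
        rw [hμ]; push_cast; exact Finset.sum_congr rfl fun n _ => by simp [μc]
    _ = ∑ j ∈ Icc 1 x, rinv j * ∑ m ∈ Icc 1 (x / j), (r * μc) m := hyp_sum _ _ x
    _ = ∑ k ∈ Icc 1 x, ∑ j ∈ (Icc 1 x).filter (fun j => x / j = k),
          rinv j * ∑ m ∈ Icc 1 (x / j), (r * μc) m := by
        refine (Finset.sum_fiberwise_of_maps_to ?_ _).symm
        intro j hj
        simp only [Finset.mem_Icc] at hj ⊢
        exact ⟨(Nat.one_le_div_iff (by omega)).mpr hj.2, Nat.div_le_self x j⟩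
    _ = ∑ k ∈ Finset.Icc 1 x,
        (∑ j ∈ Finset.Icc (x / (k + 1) + 1) (x / k), rinv j) *
          ∑ n ∈ Finset.Icc 1 k, ∑ d ∈ n.divisors,
            r d * (ArithmeticFunction.moebius (n / d) : ℂ) := by
        refine Finset.sum_congr rfl fun k hk => ?_
        simp only [Finset.mem_Icc] at hk
        have hfib := fiber_eq x k hk.1 hk.2
        rw [hinner, hfib, Finset.sum_mul]
        refine Finset.sum_congr rfl fun j hj => ?_
        have hj' : j ∈ (Icc 1 x).filter (fun j => x / j = k) := hfib ▸ hj
        have hjk : x / j = k := (Finset.mem_filter.mp hj').2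
        rw [hjk]
end

section
/- For every integer x ≥ 1, M(x) = ∑_{k=1}^{x} g⁻¹(k) · ( π(⌊x/k⌋) + 1 ), where π(y) is the number of primes not exceeding y. -/
/-!
Write `h = ε + 𝟙_ℙ`, the indicator of `{1} ∪ ℙ`. Counting the divisors of `n` that are `1` or prime
gives `g = ζ * h`, so `μ = μ * ζ * h * g⁻¹ = g⁻¹ * h`. Summing a Dirichlet product up to `x`
gives `∑_{k ≤ x} g⁻¹(k) ∑_{m ≤ x/k} h(m)`, and the inner sum is `1 + π(⌊x/k⌋)`.
-/

open Finset
open scoped ArithmeticFunction.zeta ArithmeticFunction.Moebius ArithmeticFunction.omega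

namespace ArithmeticFunction

variable {R : Type*}

section Semiring

variable [Semiring R]

variable (R) in
def primeIndicator : ArithmeticFunction R :=
  ⟨fun n => if n.Prime then 1 else 0, by simp [Nat.not_prime_zero]⟩

theorem primeIndicator_apply (n : ℕ) : primeIndicator R n = if n.Prime then 1 else 0 := rfl

theorem coe_zeta_mul_primeIndicator :
    (ζ : ArithmeticFunction R) * primeIndicator R = (ω : ArithmeticFunction R) := by
  ext n
  rcases eq_or_ne n 0 with rfl | hn
  · simp
  rw [coe_zeta_mul_apply, natCoe_apply, cardDistinctFactors_apply, ← List.card_toFinset,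
    ← Nat.primeFactors, Nat.primeFactors_eq_to_filter_divisors_prime, card_filter]
  simp [primeIndicator_apply]

theorem coe_zeta_mul_one_add_primeIndicator :
    (ζ : ArithmeticFunction R) * (1 + primeIndicator R) = ζ + ω := by
  rw [mul_add, mul_one, coe_zeta_mul_primeIndicator]

theorem sum_Ioc_primeIndicator (N : ℕ) :
    ∑ n ∈ Ioc 0 N, primeIndicator R n = Nat.primeCounting N := by
  rw [Nat.primeCounting, Nat.primeCounting', Nat.count_eq_card_filter_range]
  simp only [primeIndicator_apply, sum_boole]
  congr 2
  ext p
  simp only [mem_filter, mem_Ioc, mem_range]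
  exact ⟨fun h => ⟨by omega, h.2⟩, fun h => ⟨⟨h.2.pos, by omega⟩, h.2⟩⟩

theorem sum_Ioc_one_add_primeIndicator {N : ℕ} (hN : N ≠ 0) :
    ∑ n ∈ Ioc 0 N, (1 + primeIndicator R) n = Nat.primeCounting N + 1 := by
  simp only [ArithmeticFunction.add_apply, sum_add_distrib, sum_Ioc_primeIndicator,
    add_comm _ (1 : R)]
  simp [one_apply, Nat.one_le_iff_ne_zero.2 hN]

end Semiring

theorem coe_moebius_eq_mul_of_coe_zeta_mul_mul_eq_one [CommRing R]
    {h ginv : ArithmeticFunction R}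
    (hinv : (ζ : ArithmeticFunction R) * h * ginv = 1) : (μ : ArithmeticFunction R) = ginv * h :=
  calc (μ : ArithmeticFunction R) = μ * (ζ * h * ginv) := by rw [hinv, mul_one]
    _ = (μ * ζ) * (ginv * h) := by ring
    _ = ginv * h := by rw [coe_moebius_mul_coe_zeta, one_mul]

end ArithmeticFunction

open ArithmeticFunction

theorem stmt_3_general (g ginv : ArithmeticFunction ℂ)
    (hg : ∀ n : ℕ, 0 < n → g n = (ArithmeticFunction.cardDistinctFactors n : ℂ) + 1)
    (hginv : g * ginv = 1) (x : ℕ) :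
    ((∑ n ∈ Finset.Icc 1 x, ArithmeticFunction.moebius n : ℤ) : ℂ) =
      ∑ k ∈ Finset.Icc 1 x, ginv k * ((Nat.primeCounting (x / k) : ℂ) + 1) := by
  have hg_eq : g = ζ * (1 + primeIndicator ℂ) := by
    ext n
    rcases Nat.eq_zero_or_pos n with rfl | hn
    · simp
    rw [coe_zeta_mul_one_add_primeIndicator, hg n hn, add_comm]
    simp [hn.ne']
  have hμ := coe_moebius_eq_mul_of_coe_zeta_mul_mul_eq_one (hg_eq ▸ hginv)
  have hsum : ((∑ n ∈ Icc 1 x, μ n : ℤ) : ℂ) = ∑ n ∈ Ioc 0 x, (μ : ArithmeticFunction ℂ) n := by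
    simp [← Icc_add_one_left_eq_Ioc, intCoe_apply]
  rw [hsum, hμ, sum_Ioc_mul_eq_sum_sum, ← Icc_add_one_left_eq_Ioc]
  refine sum_congr rfl fun k hk => ?_
  rw [sum_Ioc_one_add_primeIndicator (Nat.div_pos (mem_Icc.1 hk).2 (mem_Icc.1 hk).1).ne']

/-- Let `g` be the arithmetic function with `g(n) = ω(n) + 1` for `n ≥ 1`
(`ω` counting distinct prime factors), and let `ginv` be its Dirichlet inverse
(characterized by `g * ginv = 1`).  Then for every `x ≥ 1`, the Mertens function satisfies
`M(x) = ∑_{k=1}^{x} ginv(k) (π(⌊x/k⌋) + 1)`, where `π` is the prime counting function. -/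
theorem stmt_3 (g ginv : ArithmeticFunction ℂ)
    (hg : ∀ n : ℕ, 0 < n → g n = (ArithmeticFunction.cardDistinctFactors n : ℂ) + 1)
    (hginv : g * ginv = 1) (x : ℕ) (hx : 1 ≤ x) :
    ((∑ n ∈ Finset.Icc 1 x, ArithmeticFunction.moebius n : ℤ) : ℂ) =
      ∑ k ∈ Finset.Icc 1 x, ginv k * ((Nat.primeCounting (x / k) : ℂ) + 1) :=
  stmt_3_general g ginv hg hginv x
end

section
/- For every squarefree positive integer n, |g⁻¹(n)| = ∑_{m=0}^{ω(n)} binom(ω(n), m) · m!. -/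
/-!
On squarefree numbers, `g` and its inverse depend only on `ω`. The divisors of a squarefree `n`
with `k` prime factors are the products over subsets of its prime factors, so `g * g⁻¹ = 1`
becomes the binomial convolution `∑ⱼ C(k, j) G(k - j) b(j) = [k = 0]` with `G j = j + 1`, which
determines `b`. Its solution is `b k = (-1)^k a(k)` with `a(k) = ∑ₘ C(k, m) m!`: binomial inversion
gives `∑ⱼ (-1)^j C(k, j) a(j) = (-1)^k k!`, and splitting `k - j + 1` and absorbing
`C(k, j) (k - j) = k C(k - 1, j)` turns the convolution into `k (-1)^(k-1) (k-1)! + (-1)^k k! = 0`.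
-/

open Finset ArithmeticFunction
open scoped Nat ArithmeticFunction.omega

theorem sum_range_neg_one_pow_mul_choose_mul_choose {R : Type*} [CommRing R] (k m : ℕ) :
    ∑ j ∈ range (k + 1), (-1 : R) ^ j * k.choose j * j.choose m =
      if m = k then (-1) ^ k else 0 := by
  rcases lt_or_ge k m with hkm | hmk
  · rw [if_neg hkm.ne']
    refine sum_eq_zero fun j hj => ?_
    rw [Nat.choose_eq_zero_of_lt ((mem_range.1 hj).trans_le hkm), Nat.cast_zero, mul_zero]
  obtain ⟨l, rfl⟩ := exists_add_of_le hmk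
  have hsplit : ∀ i, (-1 : R) ^ (m + i) * (m + l).choose (m + i) * (m + i).choose m =
      (-1) ^ m * (m + l).choose m * ((-1) ^ i * l.choose i) := by
    intro i
    have := Nat.choose_mul (n := m + l) (Nat.le_add_right m i)
    simp only [Nat.add_sub_cancel_left] at this
    rw [pow_add, mul_assoc _ (_ : R), ← Nat.cast_mul, this, Nat.cast_mul]
    ring
  have hsum : ∑ i ∈ range (l + 1), ((-1 : R) ^ i * l.choose i) = if l = 0 then 1 else 0 := by
    have := congr_arg (Int.cast : ℤ → R) (Int.alternating_sum_range_choose (n := l))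
    push_cast [apply_ite (Int.cast : ℤ → R)] at this
    exact this
  rw [add_assoc, sum_range_add, sum_eq_zero fun j hj => by
      rw [Nat.choose_eq_zero_of_lt (mem_range.1 hj), Nat.cast_zero, mul_zero],
    zero_add, sum_congr rfl fun i _ => hsplit i, ← mul_sum, hsum]
  by_cases hl : l = 0 <;> simp [hl]

theorem binomial_inversion {R : Type*} [CommRing R] (c : ℕ → R) (k : ℕ) :
    ∑ j ∈ range (k + 1), (-1 : R) ^ j * k.choose j * ∑ m ∈ range (j + 1), j.choose m * c m =
      (-1) ^ k * c k := by
  have hextend : ∀ j ∈ range (k + 1),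
      ∑ m ∈ range (j + 1), (j.choose m : R) * c m = ∑ m ∈ range (k + 1), j.choose m * c m := by
    intro j hj
    refine sum_subset (range_subset_range.2 (mem_range.1 hj)) fun m _ hm => ?_
    rw [Nat.choose_eq_zero_of_lt (not_lt.1 (mem_range.not.1 hm)), Nat.cast_zero, zero_mul]
  calc _ = ∑ m ∈ range (k + 1),
          (∑ j ∈ range (k + 1), (-1 : R) ^ j * k.choose j * j.choose m) * c m := by
        rw [sum_congr rfl fun j hj => by rw [hextend j hj]]
        simp_rw [mul_sum, sum_mul]
        rw [sum_comm]
        refine sum_congr rfl fun _ _ => sum_congr rfl fun _ _ => ?_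
        ring
    _ = (-1) ^ k * c k := by
        simp_rw [sum_range_neg_one_pow_mul_choose_mul_choose, ite_mul, zero_mul]
        rw [sum_ite_eq' (range (k + 1)) k, if_pos (self_mem_range_succ k)]

def arrangements (k : ℕ) : ℕ := ∑ m ∈ range (k + 1), k.choose m * m !

theorem sum_range_neg_one_pow_mul_choose_mul_arrangements {R : Type*} [CommRing R] (k : ℕ) :
    ∑ j ∈ range (k + 1), (-1 : R) ^ j * k.choose j * arrangements j = (-1) ^ k * k ! := by
  simpa [arrangements] using binomial_inversion (fun m => (m ! : R)) k

theorem sum_range_choose_mul_succ_mul_signed_arrangements {R : Type*} [CommRing R] (k : ℕ) :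
    ∑ j ∈ range (k + 1), (k.choose j : R) * ((k - j : ℕ) + 1) * ((-1) ^ j * arrangements j) =
      if k = 0 then 1 else 0 := by
  rcases k with _ | k
  · simp [arrangements]
  have habsorb : ∀ j, ((k + 1).choose j : R) * (k + 1 - j : ℕ) = (k + 1) * k.choose j := by
    intro j
    rw [← Nat.cast_mul, ← Nat.choose_mul_succ_eq]
    push_cast
    ring
  calc _ = (k + 1) * ∑ j ∈ range (k + 1 + 1), (-1 : R) ^ j * k.choose j * arrangements j
        + ∑ j ∈ range (k + 1 + 1), (-1 : R) ^ j * (k + 1).choose j * arrangements j := by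
        rw [mul_sum, ← sum_add_distrib]
        refine sum_congr rfl fun j _ => ?_
        linear_combination ((-1 : R) ^ j * arrangements j) * habsorb j
    _ = 0 := by
        rw [sum_range_succ, Nat.choose_succ_self, sum_range_neg_one_pow_mul_choose_mul_arrangements,
          sum_range_neg_one_pow_mul_choose_mul_arrangements, Nat.factorial_succ]
        push_cast
        ring

namespace ArithmeticFunction

theorem cardDistinctFactors_eq_card_primeFactors (n : ℕ) : ω n = n.primeFactors.card := by
  rw [cardDistinctFactors_apply, ← List.card_toFinset, Nat.toFinset_factors]

theorem cardDistinctFactors_prod_of_prime {s : Finset ℕ} (hs : ∀ p ∈ s, p.Prime) :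
    ω (∏ p ∈ s, p) = s.card := by
  rw [cardDistinctFactors_eq_card_primeFactors, Nat.primeFactors_prod hs]

theorem mul_apply_of_squarefree {R : Type*} [Semiring R] {f g : ArithmeticFunction R} {n : ℕ}
    (hn : Squarefree n) :
    (f * g) n =
      ∑ s ∈ n.primeFactors.powerset, f (∏ p ∈ n.primeFactors \ s, p) * g (∏ p ∈ s, p) := by
  rw [mul_apply, Nat.sum_divisorsAntidiagonal' (fun a b => f a * g b),
    ← Nat.divisors_filter_squarefree_of_squarefree hn,
    Nat.sum_divisors_filter_squarefree hn.ne_zero, Nat.factors_eq]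
  refine sum_congr (by simp [Nat.toFinset_factors]) fun s hs => ?_
  rw [prod_val, Nat.prod_primeFactors_sdiff_of_squarefree hn (mem_powerset.1 hs)]
  rfl

theorem apply_of_squarefree_of_mul_eq_one {R : Type*} [CommRing R] {g f : ArithmeticFunction R}
    (hgf : g * f = 1) {G b : ℕ → R} (hg : ∀ n, Squarefree n → g n = G (ω n))
    (hGb : ∀ k, ∑ j ∈ range (k + 1), k.choose j * G (k - j) * b j = if k = 0 then 1 else 0)
    {n : ℕ} (hn : Squarefree n) : f n = b (ω n) := by
  obtain ⟨k, hk⟩ : ∃ k, ω n = k := ⟨_, rfl⟩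
  induction k using Nat.strong_induction_on generalizing n with
  | _ k ih =>
  set P := n.primeFactors
  have hP : P.card = k := by rw [← hk, cardDistinctFactors_eq_card_primeFactors]
  have hprime : ∀ s ⊆ P, ω (∏ p ∈ s, p) = s.card := fun s hs =>
    cardDistinctFactors_prod_of_prime fun p hp => Nat.prime_of_mem_primeFactors (hs hp)
  have hsqf : ∀ s ⊆ P, Squarefree (∏ p ∈ s, p) := fun s hs =>
    hn.squarefree_of_dvd ((prod_dvd_prod_of_subset _ _ _ hs).trans (Nat.prod_primeFactors_dvd n))
  have hterm : ∀ s ∈ P.powerset.erase P,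
      g (∏ p ∈ P \ s, p) * f (∏ p ∈ s, p) = G (k - s.card) * b s.card := by
    intro s hs
    obtain ⟨hsP, hsP'⟩ : s ≠ P ∧ s ⊆ P := by simpa using hs
    have hlt : s.card < k := hP ▸ card_lt_card (ssubset_of_subset_of_ne hsP' hsP)
    rw [hg _ (hsqf _ sdiff_subset), hprime _ sdiff_subset, card_sdiff_of_subset hsP', hP,
      ih _ hlt (hsqf s hsP') (hprime s hsP'), hprime s hsP']
  have hG0 : IsUnit (G 0) := IsUnit.of_mul_eq_one (b 0) (by simpa using hGb 0)
  have hfn := congr_arg (· n) hgf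
  have hbk : ∑ s ∈ P.powerset, G (k - s.card) * b s.card = if k = 0 then 1 else 0 := by
    calc _ = ∑ j ∈ range (k + 1), k.choose j • (G (k - j) * b j) := by
          rw [← hP]
          exact sum_powerset_apply_card fun j => G (#P - j) * b j
      _ = _ := by simp only [nsmul_eq_mul, ← mul_assoc, hGb]
  -- The two sums agree except at `s = P`, where the terms are `G 0 * f n` and `G 0 * b k`.
  rw [mul_apply_of_squarefree hn, ← add_sum_erase _ _ (mem_powerset_self P), sum_congr rfl hterm,
    one_apply] at hfn
  rw [← add_sum_erase _ _ (mem_powerset_self P), hP, Nat.sub_self] at hbk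
  have hn1 : n = 1 ↔ k = 0 := by
    rw [← hk, cardDistinctFactors_eq_zero]
    have := hn.ne_zero
    omega
  rw [sdiff_self, bot_eq_empty, prod_empty, hg 1 squarefree_one, cardDistinctFactors_one,
    Nat.prod_primeFactors_of_squarefree hn, if_congr hn1 rfl rfl, ← hbk] at hfn
  rw [hk]
  exact hG0.mul_left_cancel (add_right_cancel hfn)

end ArithmeticFunction

theorem stmt_6_general (g ginv : ArithmeticFunction ℝ)
    (hg : ∀ n : ℕ, 0 < n → g n = (ArithmeticFunction.cardDistinctFactors n : ℝ) + 1)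
    (hginv : g * ginv = 1) (n : ℕ) (hsf : Squarefree n) :
    |ginv n| =
      ∑ m ∈ Finset.range (ArithmeticFunction.cardDistinctFactors n + 1),
        (((ArithmeticFunction.cardDistinctFactors n).choose m * m.factorial : ℕ) : ℝ) := by
  rw [apply_of_squarefree_of_mul_eq_one hginv (G := fun j => (j : ℝ) + 1)
      (b := fun j => (-1) ^ j * arrangements j) (fun m hm => hg m hm.ne_zero.bot_lt)
      sum_range_choose_mul_succ_mul_signed_arrangements hsf,
    abs_mul, abs_neg_one_pow, one_mul, Nat.abs_cast, arrangements, Nat.cast_sum]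

/-- Let `g` be the arithmetic function with `g(n) = ω(n) + 1` for `n ≥ 1`
and let `ginv` be its Dirichlet inverse (characterized by `g * ginv = 1`).  Then for every
squarefree positive integer `n`,
`|ginv(n)| = ∑_{m=0}^{ω(n)} C(ω(n), m) · m!`. -/
theorem stmt_6 (g ginv : ArithmeticFunction ℝ)
    (hg : ∀ n : ℕ, 0 < n → g n = (ArithmeticFunction.cardDistinctFactors n : ℝ) + 1)
    (hginv : g * ginv = 1) (n : ℕ) (hn : 0 < n) (hsf : Squarefree n) :
    |ginv n| =
      ∑ m ∈ Finset.range (ArithmeticFunction.cardDistinctFactors n + 1),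
        (((ArithmeticFunction.cardDistinctFactors n).choose m * m.factorial : ℕ) : ℝ) :=
  stmt_6_general g ginv hg hginv n hsf
end

section
/- Let h := χ_ℙ + ε, where χ_ℙ is the indicator function of the primes and ε(n) = 1 if n = 1 and 0 otherwise, and let h⁻¹ denote the Dirichlet inverse of h. Then h⁻¹(1) = 1, and for every n ≥ 2 with prime factorization n = p₁^{α₁}⋯p_r^{α_r}, h⁻¹(n) · (α₁! ⋯ α_r!) = (−1)^{Ω(n)} · Ω(n)!; that is, h⁻¹(n) = λ(n) · Ω(n)! / ∏_{p^α ∥ n} α!. -/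
/-!
For `n ≥ 2` the identity `(h * h⁻¹)(n) = 0` reads `h⁻¹(n) = -∑_{p ∣ n} h⁻¹(n / p)`.
The multinomial coefficient `Ω(n)! / ∏_{p^α ∥ n} α!` of the exponent vector of `n`
satisfies the same recursion without the sign: this is Pascal's rule for multinomial
coefficients, lowering one exponent at a time. Strong induction on `n` then gives
`h⁻¹(n) = λ(n) · Ω(n)! / ∏ α!`.
-/

open Finset Nat

theorem Finsupp.sum_id_mul_multinomial_sub_single {α : Type*} [DecidableEq α] {f : α →₀ ℕ}
    {a : α} (ha : a ∈ f.support) :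
    (f.sum fun _ => id) * (f - single a 1).multinomial = f a * f.multinomial := by
  set g := f - single a 1
  have hg_apply (b) : g b = f b - if a = b then 1 else 0 := by simp [g, single_apply]
  have hfa : f a = g a + 1 := by
    rw [hg_apply, if_pos rfl]; have := Finsupp.mem_support_iff.1 ha; omega
  have hg_erase : ∀ b ∈ f.support.erase a, g b = f b := fun b hb => by
    rw [hg_apply, if_neg (ne_of_mem_erase hb).symm]; rfl
  have hg : g.support ⊆ f.support := fun b hb => by simp only [mem_support_iff] at hb ⊢; grind
  have hsum : ∑ b ∈ f.support, f b = (∑ b ∈ f.support, g b) + 1 := by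
    rw [← Finset.add_sum_erase _ _ ha, ← Finset.add_sum_erase _ _ ha, hfa, add_right_comm,
      Finset.sum_congr rfl hg_erase]
  have hprod : ∏ b ∈ f.support, (f b)! = f a * ∏ b ∈ f.support, (g b)! := by
    rw [← Finset.mul_prod_erase _ _ ha, ← Finset.mul_prod_erase _ (fun b => (g b)!) ha,
      ← mul_assoc, hfa, ← factorial_succ,
      Finset.prod_congr rfl fun b hb => by rw [← hg_erase b hb]]
  have hspec_f : (∏ b ∈ f.support, (f b)!) * f.multinomial = (∑ b ∈ f.support, f b)! :=
    Nat.multinomial_spec f.support f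
  have hspec_g : (∏ b ∈ f.support, (g b)!) * g.multinomial = (∑ b ∈ f.support, g b)! := by
    rw [Finsupp.multinomial_eq_of_support_subset hg, Nat.multinomial_spec]
  change (∑ b ∈ f.support, f b) * g.multinomial = _
  refine Nat.eq_of_mul_eq_mul_left (prod_pos (s := f.support) fun b _ => factorial_pos (g b)) ?_
  calc (∏ b ∈ f.support, (g b)!) * ((∑ b ∈ f.support, f b) * g.multinomial)
      = (∑ b ∈ f.support, f b)! := by rw [mul_left_comm, hspec_g, hsum, factorial_succ]
    _ = _ := by rw [← hspec_f, hprod]; ring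

theorem Finsupp.multinomial_eq_sum_multinomial_sub_single {α : Type*} [DecidableEq α]
    {f : α →₀ ℕ} (hf : f ≠ 0) :
    f.multinomial = ∑ a ∈ f.support, (f - single a 1).multinomial := by
  have hN : 0 < f.sum fun _ => id := by
    obtain ⟨a, ha⟩ := Finsupp.support_nonempty_iff.2 hf
    exact Finset.sum_pos' (fun _ _ => Nat.zero_le _)
      ⟨a, ha, Nat.pos_of_ne_zero (mem_support_iff.1 ha)⟩
  refine Nat.eq_of_mul_eq_mul_left hN ?_
  rw [Finset.mul_sum, Finset.sum_congr rfl fun a ha => sum_id_mul_multinomial_sub_single ha,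
    ← Finset.sum_mul]
  rfl

open ArithmeticFunction
open scoped ArithmeticFunction.Omega

namespace Nat

theorem factorization_div_prime {n p : ℕ} (hp : p.Prime) (hpn : p ∣ n) :
    (n / p).factorization = n.factorization - Finsupp.single p 1 := by
  rw [factorization_div hpn, hp.factorization]

theorem cardFactors_div_prime_add_one {n p : ℕ} (hn : n ≠ 0) (hp : p.Prime) (hpn : p ∣ n) :
    Ω (n / p) + 1 = Ω n := by
  have hquot : n / p ≠ 0 := (Nat.div_pos (Nat.le_of_dvd (Nat.pos_of_ne_zero hn) hpn) hp.pos).ne'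
  conv_rhs => rw [← Nat.div_mul_cancel hpn]
  rw [cardFactors_mul hquot hp.ne_zero, cardFactors_apply_prime hp]

theorem multinomial_factorization_eq_sum_primeFactors {n : ℕ} (hn : 2 ≤ n) :
    n.factorization.multinomial = ∑ p ∈ n.primeFactors, (n / p).factorization.multinomial := by
  rw [Finsupp.multinomial_eq_sum_multinomial_sub_single, support_factorization]
  · exact Finset.sum_congr rfl fun p hp => by
      rw [factorization_div_prime (prime_of_mem_primeFactors hp) (dvd_of_mem_primeFactors hp)]
  · intro h
    rw [factorization_eq_zero_iff'] at h
    omega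

theorem prod_factorial_factorization_mul_multinomial (n : ℕ) :
    (∏ p ∈ n.primeFactors, (n.factorization p)!) * n.factorization.multinomial = (Ω n)! := by
  rw [cardFactors_eq_sum_factorization, Finsupp.multinomial_eq, support_factorization]
  exact Nat.multinomial_spec _ _

end Nat

namespace ArithmeticFunction

theorem mul_apply_eq_add_sum_primeFactors {R : Type*} [Semiring R] {h g : ArithmeticFunction R}
    (hh : ∀ n : ℕ, 0 < n → h n = (if n.Prime then 1 else 0) + (if n = 1 then 1 else 0))
    {n : ℕ} (hn : n ≠ 0) :
    (h * g) n = g n + ∑ p ∈ n.primeFactors, g (n / p) := by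
  rw [mul_apply, Nat.sum_divisorsAntidiagonal (fun d e => h d * g e),
    Finset.sum_congr rfl fun d hd => by rw [hh d (Nat.pos_of_mem_divisors hd), add_mul],
    Finset.sum_add_distrib, add_comm]
  simp only [ite_mul, one_mul, zero_mul, Finset.sum_ite_eq', Nat.one_mem_divisors.2 hn,
    if_true, Nat.div_one, ← Finset.sum_filter, Nat.primeFactors_eq_to_filter_divisors_prime]

theorem apply_eq_neg_one_pow_mul_multinomial {R : Type*} [CommRing R]
    {h g : ArithmeticFunction R}
    (hh : ∀ n : ℕ, 0 < n → h n = (if n.Prime then 1 else 0) + (if n = 1 then 1 else 0))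
    (hg : h * g = 1) {n : ℕ} (hn : n ≠ 0) :
    g n = (-1) ^ Ω n * n.factorization.multinomial := by
  induction n using Nat.strong_induction_on with
  | _ n ih =>
    obtain rfl | hn2 : n = 1 ∨ 2 ≤ n := by omega
    · simpa [mul_apply_eq_add_sum_primeFactors hh one_ne_zero, Finsupp.multinomial_eq] using
        congr($hg 1)
    have hrec : g n = -∑ p ∈ n.primeFactors, g (n / p) := by
      have := congr($hg n)
      rw [mul_apply_eq_add_sum_primeFactors hh hn, one_apply_ne (by omega)] at this
      exact eq_neg_of_add_eq_zero_left this
    rw [hrec, Nat.multinomial_factorization_eq_sum_primeFactors hn2, Nat.cast_sum, Finset.mul_sum,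
      ← Finset.sum_neg_distrib]
    refine Finset.sum_congr rfl fun p hp => ?_
    have hp' := Nat.prime_of_mem_primeFactors hp
    have hpn := Nat.dvd_of_mem_primeFactors hp
    rw [ih (n / p) (Nat.div_lt_self (by omega) hp'.one_lt)
      (Nat.div_pos (Nat.le_of_dvd (by omega) hpn) hp'.pos).ne',
      ← Nat.cardFactors_div_prime_add_one hn hp' hpn, pow_succ]
    ring

end ArithmeticFunction

/-- Let `h = χ_ℙ + ε` (indicator of the primes plus the convolution
identity) and let `hinv` be its Dirichlet inverse (characterized by `h * hinv = 1`).
Then `hinv(1) = 1` and, for every `n ≥ 2` with prime factorization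
`n = p₁^{α₁} ⋯ p_r^{α_r}`, `hinv(n) · (α₁! ⋯ α_r!) = (−1)^{Ω(n)} · Ω(n)!`. -/
theorem stmt_8 (h hinv : ArithmeticFunction ℝ)
    (hh : ∀ n : ℕ, 0 < n →
      h n = (if n.Prime then 1 else 0) + (if n = 1 then 1 else 0))
    (hinv_eq : h * hinv = 1) :
    hinv 1 = 1 ∧
      ∀ n : ℕ, 2 ≤ n →
        hinv n * ∏ p ∈ n.primeFactors, ((n.factorization p).factorial : ℝ) =
          (-1 : ℝ) ^ (ArithmeticFunction.cardFactors n) *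
            ((ArithmeticFunction.cardFactors n).factorial : ℝ) := by
  refine ⟨by simpa [Finsupp.multinomial_eq] using
    apply_eq_neg_one_pow_mul_multinomial hh hinv_eq one_ne_zero,
    fun n hn => ?_⟩
  rw [apply_eq_neg_one_pow_mul_multinomial hh hinv_eq (by omega), mul_assoc, ← Nat.cast_prod,
    ← Nat.cast_mul, mul_comm n.factorization.multinomial,
    Nat.prod_factorial_factorization_mul_multinomial]
end

section
/- Let n₁, n₂ ≥ 2 be integers whose prime factorizations have the same multiset of exponents; that is, if n₁ = p₁^{α₁}⋯p_r^{α_r} and n₂ = q₁^{β₁}⋯q_s^{β_s} with distinct primes p_i and distinct primes q_j, then r = s and the multisets {α₁, …, α_r} and {β₁, …, β_s} coincide. Then g⁻¹(n₁) = g⁻¹(n₂). -/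
/-!
A permutation `τ` of the primes induces a multiplicative automorphism `e` of `ℕ`, and
precomposition with any multiplicative automorphism of `ℕ` is a ring automorphism of the
Dirichlet ring, since `e` maps the divisor pairs of `n` bijectively onto those of `e n`.
Such an `e` preserves `ω`, hence fixes `g = ω + 1`, hence fixes its Dirichlet inverse by
uniqueness of inverses. Two integers with the same multiset of exponents are related by such
an automorphism: match their prime factors exponent by exponent and extend to all primes.
-/

theorem Finset.natCard_fiber_eq_count {α β : Type*} [DecidableEq β] (s : Finset α) (f : α → β)
    (b : β) : Nat.card {a : s // f a = b} = (s.val.map f).count b := by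
  classical
  rw [Nat.card_congr (Equiv.subtypeSubtypeEquivSubtypeInter (· ∈ s) (f · = b)),
    Multiset.count_map, ← Finset.filter_val, Finset.card_val, ← Nat.card_eq_finsetCard]
  simp [eq_comm]

theorem Finset.exists_equiv_of_map_val_eq {α β γ : Type*} {s : Finset α} {t : Finset β}
    {f : α → γ} {g : β → γ} (h : s.val.map f = t.val.map g) :
    ∃ σ : s ≃ t, ∀ a, g (σ a) = f a := by
  classical
  have hfiber (c : γ) : Nat.card {a : s // f a = c} = Nat.card {b : t // g b = c} := by
    rw [natCard_fiber_eq_count, natCard_fiber_eq_count, h]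
  exact ⟨_, Equiv.ofFiberEquiv_map fun c => (Finite.card_eq.mp (hfiber c)).some⟩

namespace Nat

theorem primeFactors_mulEquiv (e : ℕ ≃* ℕ) (n : ℕ) :
    (e n).primeFactors = n.primeFactors.map e.toEquiv.toEmbedding := by
  ext q
  obtain ⟨p, rfl⟩ := e.surjective q
  simp [mem_primeFactors, Nat.prime_iff, MulEquiv.prime_iff, map_dvd_iff]

section relabel

open Finsupp

variable {τ : Equiv.Perm ℕ}

-- `0` is sent to `0`, so that the map is multiplicative on all of `ℕ`.
noncomputable def relabelPrimesFun (τ : Equiv.Perm ℕ) (n : ℕ) : ℕ :=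
  if n = 0 then 0 else (n.factorization.equivMapDomain τ).prod (· ^ ·)

theorem prime_symm_apply_iff (hτ : ∀ p, (τ p).Prime ↔ p.Prime) (p : ℕ) :
    (τ.symm p).Prime ↔ p.Prime := by
  rw [← hτ, Equiv.apply_symm_apply]

theorem prime_of_mem_support_equivMapDomain (hτ : ∀ p, (τ p).Prime ↔ p.Prime) {n q : ℕ}
    (hq : q ∈ (n.factorization.equivMapDomain τ).support) : q.Prime := by
  rw [mem_support_iff, equivMapDomain_apply, ← mem_support_iff, support_factorization] at hq
  exact (prime_symm_apply_iff hτ q).mp (prime_of_mem_primeFactors hq)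

theorem relabelPrimesFun_ne_zero (hτ : ∀ p, (τ p).Prime ↔ p.Prime) {n : ℕ} (hn : n ≠ 0) :
    relabelPrimesFun τ n ≠ 0 := by
  rw [relabelPrimesFun, if_neg hn, Finsupp.prod]
  exact Finset.prod_ne_zero_iff.mpr fun q hq =>
    pow_ne_zero _ (prime_of_mem_support_equivMapDomain hτ hq).ne_zero

theorem factorization_relabelPrimesFun (hτ : ∀ p, (τ p).Prime ↔ p.Prime) {n : ℕ} (hn : n ≠ 0) :
    (relabelPrimesFun τ n).factorization = n.factorization.equivMapDomain τ := by
  rw [relabelPrimesFun, if_neg hn]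
  exact prod_pow_factorization_eq_self fun q hq => prime_of_mem_support_equivMapDomain hτ hq

theorem relabelPrimesFun_symm (hτ : ∀ p, (τ p).Prime ↔ p.Prime) (n : ℕ) :
    relabelPrimesFun τ.symm (relabelPrimesFun τ n) = n := by
  have hτ' := prime_symm_apply_iff hτ
  rcases eq_or_ne n 0 with rfl | hn
  · simp [relabelPrimesFun]
  refine eq_of_factorization_eq (relabelPrimesFun_ne_zero hτ' (relabelPrimesFun_ne_zero hτ hn))
    hn fun p => ?_
  rw [factorization_relabelPrimesFun hτ' (relabelPrimesFun_ne_zero hτ hn),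
    equivMapDomain_apply, factorization_relabelPrimesFun hτ hn, equivMapDomain_apply,
    Equiv.symm_symm, Equiv.symm_apply_apply]

noncomputable def relabelPrimes (τ : Equiv.Perm ℕ) (hτ : ∀ p, (τ p).Prime ↔ p.Prime) :
    ℕ ≃* ℕ where
  toFun := relabelPrimesFun τ
  invFun := relabelPrimesFun τ.symm
  left_inv := relabelPrimesFun_symm hτ
  right_inv := relabelPrimesFun_symm (τ := τ.symm) (prime_symm_apply_iff hτ)
  map_mul' a b := by
    rcases eq_or_ne a 0 with rfl | ha
    · simp [relabelPrimesFun]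
    rcases eq_or_ne b 0 with rfl | hb
    · simp [relabelPrimesFun]
    refine eq_of_factorization_eq (relabelPrimesFun_ne_zero hτ (mul_ne_zero ha hb))
      (mul_ne_zero (relabelPrimesFun_ne_zero hτ ha) (relabelPrimesFun_ne_zero hτ hb)) fun p => ?_
    simp [factorization_mul, relabelPrimesFun_ne_zero hτ, ha, hb,
      factorization_relabelPrimesFun hτ]

theorem relabelPrimes_eq_of_factorization (hτ : ∀ p, (τ p).Prime ↔ p.Prime) {m n : ℕ}
    (hm : m ≠ 0) (hn : n ≠ 0) (h : ∀ p, n.factorization (τ p) = m.factorization p) :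
    relabelPrimes τ hτ m = n := by
  refine eq_of_factorization_eq (relabelPrimesFun_ne_zero hτ hm) hn fun p => ?_
  rw [relabelPrimes, MulEquiv.coe_mk, Equiv.coe_fn_mk, factorization_relabelPrimesFun hτ hm,
    equivMapDomain_apply, ← h, Equiv.apply_symm_apply]

end relabel

theorem exists_primesPerm_factorization_eq {m n : ℕ}
    (h : m.primeFactors.val.map m.factorization = n.primeFactors.val.map n.factorization) :
    ∃ π : Equiv.Perm {p : ℕ // p.Prime}, ∀ p, n.factorization (π p) = m.factorization p := by
  obtain ⟨σ, hσ⟩ := Finset.exists_equiv_of_map_val_eq h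
  let ι (k : ℕ) (p : k.primeFactors) : {p : ℕ // p.Prime} := ⟨p, prime_of_mem_primeFactors p.2⟩
  have hι (k : ℕ) : Function.Injective (ι k) := fun _ _ hpq => Subtype.ext (Subtype.mk.inj hpq)
  obtain ⟨π, hπ⟩ :=
    Equiv.Perm.exists_extending_pair (ι m) (ι n ∘ σ) (hι m) ((hι n).comp σ.injective)
  refine ⟨π, fun p => ?_⟩
  by_cases hp : (p : ℕ) ∈ m.primeFactors
  · exact (congrArg (fun q : {p : ℕ // p.Prime} => n.factorization q) (hπ ⟨p, hp⟩)).trans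
      (hσ ⟨p, hp⟩)
  · have hπp : (π p : ℕ) ∉ n.primeFactors := fun hπp => by
      have := hπ (σ.symm ⟨_, hπp⟩)
      simp only [Function.comp_apply, Equiv.apply_symm_apply] at this
      exact hp (π.injective this ▸ (σ.symm ⟨_, hπp⟩).2)
    rw [← support_factorization, Finsupp.notMem_support_iff] at hp hπp
    rw [hp, hπp]

theorem exists_perm_factorization_eq {m n : ℕ}
    (h : m.primeFactors.val.map m.factorization = n.primeFactors.val.map n.factorization) :
    ∃ τ : Equiv.Perm ℕ, (∀ p, (τ p).Prime ↔ p.Prime) ∧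
      ∀ p, n.factorization (τ p) = m.factorization p := by
  obtain ⟨π, hπ⟩ := exists_primesPerm_factorization_eq h
  refine ⟨π.extendDomain (Equiv.refl _), fun p => ?_, fun p => ?_⟩ <;> by_cases hp : p.Prime
  · rw [Equiv.Perm.extendDomain_apply_subtype _ _ hp]
    exact iff_of_true (π _).2 hp
  · rw [Equiv.Perm.extendDomain_apply_not_subtype _ _ hp]
  · rw [Equiv.Perm.extendDomain_apply_subtype _ _ hp]
    exact hπ ⟨p, hp⟩
  · rw [Equiv.Perm.extendDomain_apply_not_subtype _ _ hp, factorization_eq_zero_of_not_prime _ hp,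
      factorization_eq_zero_of_not_prime _ hp]

end Nat

namespace ArithmeticFunction

variable {R : Type*}

def compMulEquiv [Zero R] (f : ArithmeticFunction R) (e : ℕ ≃* ℕ) : ArithmeticFunction R :=
  ⟨fun n => f (e n), by simp⟩

@[simp]
theorem compMulEquiv_apply [Zero R] (f : ArithmeticFunction R) (e : ℕ ≃* ℕ) (n : ℕ) :
    f.compMulEquiv e n = f (e n) := rfl

theorem one_compMulEquiv [Zero R] [One R] (e : ℕ ≃* ℕ) :
    (1 : ArithmeticFunction R).compMulEquiv e = 1 := by
  ext n
  simp [one_apply]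

theorem mul_compMulEquiv [Semiring R] (f h : ArithmeticFunction R) (e : ℕ ≃* ℕ) :
    (f * h).compMulEquiv e = f.compMulEquiv e * h.compMulEquiv e := by
  ext n
  simp only [compMulEquiv_apply, mul_apply]
  symm
  refine Finset.sum_nbij' (Prod.map e e) (Prod.map e.symm e.symm) ?_ ?_ ?_ ?_ ?_ <;>
    simp +contextual [Nat.mem_divisorsAntidiagonal, ← map_mul]

theorem compMulEquiv_eq_self_of_mul_eq_one [CommSemiring R] {f h : ArithmeticFunction R}
    {e : ℕ ≃* ℕ} (hf : f.compMulEquiv e = f) (hfh : f * h = 1) : h.compMulEquiv e = h := by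
  refine (left_inv_eq_right_inv (mul_comm h f ▸ hfh) ?_).symm
  rw [← hf, ← mul_compMulEquiv, hfh, one_compMulEquiv]

theorem cardDistinctFactors_mulEquiv (e : ℕ ≃* ℕ) (n : ℕ) :
    cardDistinctFactors (e n) = cardDistinctFactors n := by
  rw [cardDistinctFactors_apply, cardDistinctFactors_apply, ← List.card_toFinset,
    ← List.card_toFinset, ← Nat.primeFactors, ← Nat.primeFactors, Nat.primeFactors_mulEquiv,
    Finset.card_map]

end ArithmeticFunction

/-- Let `g` be the arithmetic function with `g(n) = ω(n) + 1` for `n ≥ 1`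
and let `ginv` be its Dirichlet inverse (characterized by `g * ginv = 1`).  If `n₁, n₂ ≥ 2`
have the same multiset of exponents in their prime factorizations, then
`ginv(n₁) = ginv(n₂)`. -/
theorem stmt_11 (g ginv : ArithmeticFunction ℝ)
    (hg : ∀ n : ℕ, 0 < n → g n = (ArithmeticFunction.cardDistinctFactors n : ℝ) + 1)
    (hginv : g * ginv = 1) (n₁ n₂ : ℕ) (h1 : 2 ≤ n₁) (h2 : 2 ≤ n₂)
    (hexp : n₁.primeFactors.val.map (fun p => n₁.factorization p) =
            n₂.primeFactors.val.map (fun p => n₂.factorization p)) :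
    ginv n₁ = ginv n₂ := by
  obtain ⟨τ, hτ, hfac⟩ := Nat.exists_perm_factorization_eq hexp
  set e := Nat.relabelPrimes τ hτ
  have he : e n₁ = n₂ := Nat.relabelPrimes_eq_of_factorization hτ (by omega) (by omega) hfac
  have hge : g.compMulEquiv e = g := by
    ext n
    rcases eq_or_ne n 0 with rfl | hn
    · simp
    have hen : e n ≠ 0 := (map_ne_zero_iff e e.injective).mpr hn
    rw [ArithmeticFunction.compMulEquiv_apply, hg _ hen.bot_lt, hg n hn.bot_lt,
      ArithmeticFunction.cardDistinctFactors_mulEquiv]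
  rw [← he, ← ArithmeticFunction.compMulEquiv_apply,
    ArithmeticFunction.compMulEquiv_eq_self_of_mul_eq_one hge hginv]
end
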